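/- Let q > 1, a ≥ 2q, 0 < β ≤ 1, and let l ≥ 1 be an integer. Define ε_l(v) = R_l(v)/(a·M_l(v)). Then for every v ∈ (β/q^{l+1}, β/q^l], one has ε_l(v) ≤ max{(l−1)·l/(2a·q^{l−1}), l·(l+1)/(2a·q^l)}. -/
import Mathlib


open Finset

/-- `A_l = β q^l (1+q) - (q/a+1) β + q/a`. -/
noncomputable def Acoef (a q β : ℝ) (l : ℕ) : ℝ := β*q^l*(1 + q) - (q/a + 1)*β + q/a

/-- `B_l = q^{2l+1}`. -/
noncomputable def Bcoef (q : ℝ) (l : ℕ) : ℝ := q^(2*l+1)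

/-- `Ã_l = β(q-1)((2-a/q)l + (l-1)l/2) + βq(l+2-a/q)`. -/
noncomputable def Atil (a q β : ℝ) (l : ℕ) : ℝ :=
  β*(q - 1)*((2 - a/q)*(l:ℝ) + ((l:ℝ) - 1)*(l:ℝ)/2) + β*q*((l:ℝ) + 2 - a/q)

/-- `B̃_l = q^{l+1}(l+2-a/q)`. -/
noncomputable def Btil (a q : ℝ) (l : ℕ) : ℝ := q^(l+1)*((l:ℝ) + 2 - a/q)

private lemma key_ineq (q a β L Q : ℝ) (hq : 1 < q) (ha : 2*q ≤ a)
    (hβ0 : 0 < β) (hβ1 : β ≤ 1) (hL : 1 ≤ L) (hQ : q ≤ Q) :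
    β*(q-1)*(2*a*Q*(2*q-a)*L + a*q*Q*(L-1)*L)
      ≤ (L-1)*L*a*q^2*β*(Q-1) + (L-1)*L*q^3*(1-β) := by
  have ha0 : (0:ℝ) < a := by linarith
  have hT1 : (0:ℝ) ≤ 2*a*Q*β*(q-1)*L*(a-2*q) :=
    mul_nonneg (mul_nonneg (mul_nonneg (mul_nonneg (mul_nonneg
      (by linarith : (0:ℝ) ≤ 2*a) (by linarith : (0:ℝ) ≤ Q)) hβ0.le)
      (by linarith : (0:ℝ) ≤ q-1)) (by linarith : (0:ℝ) ≤ L))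
      (by linarith : (0:ℝ) ≤ a-2*q)
  have hT2 : (0:ℝ) ≤ a*q*β*((L-1)*L)*(Q-q) :=
    mul_nonneg (mul_nonneg (mul_nonneg (mul_nonneg ha0.le (by linarith : (0:ℝ) ≤ q)) hβ0.le)
      (mul_nonneg (by linarith) (by linarith))) (by linarith)
  have hT3 : (0:ℝ) ≤ q^3*((L-1)*L)*(1-β) :=
    mul_nonneg (mul_nonneg (by positivity) (mul_nonneg (by linarith) (by linarith)))
      (by linarith)
  nlinarith [hT1, hT2, hT3]

set_option maxHeartbeats 1600000 in
private lemma main_abstract (q a β L Q v : ℝ) (hq : 1 < q) (ha : 2*q ≤ a)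
    (hβ0 : 0 < β) (hβ1 : β ≤ 1) (hL : 1 ≤ L) (hQq : q ≤ Q)
    (hv1 : β/(Q*q) ≤ v) (hv2 : v ≤ β/Q) :
    (β*(q - 1)*((2 - a/q)*L + (L - 1)*L/2) + β*q*(L + 2 - a/q) - Q*q*(L + 2 - a/q)*v)
      / (a*(β*Q*(1 + q) - (q/a + 1)*β + q/a - Q*Q*q*v))
      ≤ max ((L - 1)*L/(2*a*(Q/q))) (L*(L + 1)/(2*a*Q)) := by
  have hq0 : (0:ℝ) < q := by linarith
  have ha0 : (0:ℝ) < a := by linarith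
  have hQ1 : (1:ℝ) < Q := lt_of_lt_of_le hq hQq
  have hQ0 : (0:ℝ) < Q := by linarith
  set c1 : ℝ := (L - 1)*L/(2*a*(Q/q)) with hc1
  set c2 : ℝ := L*(L + 1)/(2*a*Q) with hc2
  set c : ℝ := max c1 c2 with hc
  set Av : ℝ := β*Q*(1 + q) - (q/a + 1)*β + q/a with hA
  set Bv : ℝ := Q*Q*q with hB
  set At : ℝ := β*(q - 1)*((2 - a/q)*L + (L - 1)*L/2) + β*q*(L + 2 - a/q) with hAt
  set Bt : ℝ := Q*q*(L + 2 - a/q) with hBt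
  -- positivity of the denominator at the right endpoint
  have hM2pos : 0 < Av - Bv*(β/Q) := by
    have e : Av - Bv*(β/Q) = β*(Q-1) + (q/a)*(1-β) := by
      rw [hA, hB]; field_simp; ring
    rw [e]
    have h1 : 0 < β*(Q-1) := mul_pos hβ0 (by linarith)
    have h2 : 0 ≤ (q/a)*(1-β) := mul_nonneg (by positivity) (by linarith)
    linarith
  have hM1pos : 0 < Av - Bv*(β/(Q*q)) := by
    have hBv0 : 0 < Bv := by rw [hB]; positivity
    have hvv : β/(Q*q) ≤ β/Q := by
      apply div_le_div_of_nonneg_left hβ0.le (by positivity)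
      nlinarith
    have hm : Bv*(β/(Q*q)) ≤ Bv*(β/Q) := mul_le_mul_of_nonneg_left hvv hBv0.le
    clear_value Av Bv
    linarith
  have hMpos : 0 < Av - Bv*v := by
    have hBv0 : 0 < Bv := by rw [hB]; positivity
    have hm : Bv*v ≤ Bv*(β/Q) := mul_le_mul_of_nonneg_left hv2 hBv0.le
    clear_value Av Bv
    linarith
  have hden : 0 < a*(Av - Bv*v) := mul_pos ha0 hMpos
  rw [div_le_iff₀ hden]
  -- endpoint inequality at v₂ = β/Q
  have key2 := key_ineq q a β L Q hq ha hβ0 hβ1 hL hQq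
  have h2 : At - Bt*(β/Q) ≤ c1*(a*(Av - Bv*(β/Q))) := by
    rw [← sub_nonneg]
    have e : c1*(a*(Av - Bv*(β/Q))) - (At - Bt*(β/Q))
        = ((L-1)*L*a*q^2*β*(Q-1) + (L-1)*L*q^3*(1-β)
            - β*(q-1)*(2*a*Q*(2*q-a)*L + a*q*Q*(L-1)*L)) / (2*a*q*Q) := by
      rw [hc1, hA, hB, hAt, hBt]; field_simp; ring
    rw [e]
    exact div_nonneg (by linarith) (by positivity)
  -- endpoint inequality at v₁ = β/(Q*q)
  have hQq' : q ≤ q*Q := by nlinarith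
  have key1 := key_ineq q a β (L+1) (q*Q) hq ha hβ0 hβ1 (by linarith) hQq'
  have h1 : At - Bt*(β/(Q*q)) ≤ c2*(a*(Av - Bv*(β/(Q*q)))) := by
    rw [← sub_nonneg]
    have e : c2*(a*(Av - Bv*(β/(Q*q)))) - (At - Bt*(β/(Q*q)))
        = (((L+1)-1)*(L+1)*a*q^2*β*(q*Q-1) + ((L+1)-1)*(L+1)*q^3*(1-β)
            - β*(q-1)*(2*a*(q*Q)*(2*q-a)*(L+1) + a*q*(q*Q)*((L+1)-1)*(L+1)))
          / (2*a*q*(q*Q)) := by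
      rw [hc2, hA, hB, hAt, hBt]; field_simp; ring
    rw [e]
    exact div_nonneg (by linarith) (by positivity)
  -- upgrade to the max bound
  clear_value Av Bv At Bt
  have hM2nn : 0 ≤ a*(Av - Bv*(β/Q)) := le_of_lt (mul_pos ha0 hM2pos)
  have hM1nn : 0 ≤ a*(Av - Bv*(β/(Q*q))) := le_of_lt (mul_pos ha0 hM1pos)
  have hcc1 : c1 ≤ c := le_max_left c1 c2
  have hcc2 : c2 ≤ c := le_max_right c1 c2
  clear_value c1 c2 c
  have h2' : At - Bt*(β/Q) ≤ c*(a*(Av - Bv*(β/Q))) := by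
    have := mul_le_mul_of_nonneg_right hcc1 hM2nn
    linarith
  have h1' : At - Bt*(β/(Q*q)) ≤ c*(a*(Av - Bv*(β/(Q*q)))) := by
    have := mul_le_mul_of_nonneg_right hcc2 hM1nn
    linarith
  -- linear interpolation in v
  rcases le_or_gt 0 (c*a*Bv - Bt) with hD | hD
  · have hm : (c*a*Bv - Bt)*v ≤ (c*a*Bv - Bt)*(β/Q) := mul_le_mul_of_nonneg_left hv2 hD
    nlinarith [h2', hm]
  · have hm : (c*a*Bv - Bt)*v ≤ (c*a*Bv - Bt)*(β/(Q*q)) :=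
      mul_le_mul_of_nonpos_left hv1 hD.le
    nlinarith [h1', hm]

/-- For `l ≥ 1`, on `(β/q^{l+1}, β/q^l]` the ratio
`ε_l(v) = R_l(v)/(a M_l(v))` is bounded by `max{(l-1)l/(2aq^{l-1}), l(l+1)/(2aq^l)}`. -/
theorem stmt_12
    (q a β : ℝ) (hq : 1 < q) (ha : 2*q ≤ a) (hβ0 : 0 < β) (hβ1 : β ≤ 1)
    (l : ℕ) (hl : 1 ≤ l) :
    ∀ v ∈ Set.Ioc (β/q^(l+1)) (β/q^l),
      (Atil a q β l - Btil a q l * v) / (a * (Acoef a q β l - Bcoef q l * v))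
        ≤ max (((l:ℝ) - 1)*(l:ℝ)/(2*a*q^(l-1))) ((l:ℝ)*((l:ℝ) + 1)/(2*a*q^l)) := by
  intro v hv
  obtain ⟨hv1, hv2⟩ := hv
  have hq0 : (0:ℝ) < q := by linarith
  have hL : (1:ℝ) ≤ (l:ℝ) := by exact_mod_cast hl
  have hQq : q ≤ q^l := by
    calc q = q^1 := (pow_one q).symm
    _ ≤ q^l := pow_le_pow_right₀ (le_of_lt hq) hl
  have e2l : q^(2*l+1) = q^l*q^l*q := by
    rw [two_mul, pow_succ, pow_add]
  have el1 : q^(l+1) = q^l*q := pow_succ q l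
  have elm : q^(l-1) = q^l/q := by
    rw [eq_div_iff (ne_of_gt hq0), ← pow_succ]
    congr 1
    omega
  have hv1' : β/(q^l*q) ≤ v := by
    rw [← el1]; exact le_of_lt hv1
  have := main_abstract q a β (l:ℝ) (q^l) v hq ha hβ0 hβ1 hL hQq hv1' hv2
  simp only [Atil, Btil, Acoef, Bcoef, e2l, el1, elm]
  convert this using 2 <;> ring
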